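/- Let A ∈ B^{n×n} and λ ∈ B over the max-min algebra. The set of pure λ-eigenvectors of A (vectors x with A ⊗ x = x and x_i ≤ λ for all i) equals the max-min column space { A^*_λ ⊗ y : y ∈ B^n }, where A^*_λ is the matrix whose i-th column is min(λ, (A^+)_{ii}, ·) applied entrywise to the i-th column of A^*, i.e. (A^*_λ)_{ki} = min(λ, (A^+)_{ii}, (A^*)_{ki}). In particular, each column of A^*_λ is a pure λ-eigenvector of A. -/

import Mathlib

/-!
The columns of `A*_λ` are eigenvectors because `A ⊗ A* = A⁺` and
`A⁺_ii ⊓ A⁺_ki = A⁺_ii ⊓ A*_ki`: a walk `k → i` of length zero forces `k = i`, so the factor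
`A⁺_ii` accounts for it. Both identities rest on `A^m ≤ A*` for every `m`, obtained by removing
cycles from a heaviest walk.

Conversely, let `x` be a pure eigenvector. Each `x_j` is attained as some `A_jl ⊓ x_l`; following
these maximisers from `k` gives a walk all of whose edges and vertices carry at least `x_k`. By
pigeonhole it revisits a vertex `i` within `|α|` steps, so `x_k ≤ A*_ki ⊓ A⁺_ii ⊓ x_i`, whence
`x ≤ A*_λ ⊗ x`; the reverse inequality holds for every eigenvector.
-/

noncomputable section

/-- The max-min algebra: the unit interval `[0,1] ⊆ ℝ` with `⊕ = max = ⊔` and `⊗ = min = ⊓`. -/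
abbrev B : Type := unitInterval

instance : Fact ((0:ℝ) ≤ 1) := ⟨zero_le_one⟩

/-- Max-min matrix-vector product: `(A ⊗ x)_i = max_j min (A i j) (x j)`. -/
def mmVec {α β : Type*} (A : Matrix α β B) (x : β → B) : α → B :=
  fun i => ⨆ j, A i j ⊓ x j

/-- Max-min matrix-matrix product. -/
def mmMul {α β γ : Type*} (A : Matrix α β B) (C : Matrix β γ B) : Matrix α γ B :=
  fun i k => ⨆ j, A i j ⊓ C j k

/-- The max-min identity matrix. -/
def mmId (α : Type*) [DecidableEq α] : Matrix α α B :=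
  fun i j => if i = j then 1 else 0

/-- Max-min matrix powers, `A^0 = I`. -/
def mmPow {α : Type*} [DecidableEq α] (A : Matrix α α B) : ℕ → Matrix α α B
  | 0 => mmId α
  | k + 1 => mmMul A (mmPow A k)

/-- The metric matrix `A⁺ = A ⊕ A² ⊕ ... ⊕ Aⁿ`. -/
def mmPlus {α : Type*} [Fintype α] [DecidableEq α] (A : Matrix α α B) : Matrix α α B :=
  fun i j => ⨆ k ∈ Finset.Icc 1 (Fintype.card α), mmPow A k i j

/-- The Kleene star `A* = I ⊕ A ⊕ ... ⊕ A^{n-1}`. -/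
def mmStar {α : Type*} [Fintype α] [DecidableEq α] (A : Matrix α α B) : Matrix α α B :=
  fun i j => ⨆ k ∈ Finset.range (Fintype.card α), mmPow A k i j

/-- The matrix `A*_λ`, whose `i`-th column has entries `min (λ, (A⁺)_{ii}, (A*)_{ki})`. -/
def mmStarLam {α : Type*} [Fintype α] [DecidableEq α] (A : Matrix α α B) (lam : B) :
    Matrix α α B :=
  fun k i => lam ⊓ mmPlus A i i ⊓ mmStar A k i

open Finset

namespace MaxMin

lemma mmVec_mmMul {α β γ : Type*} (A : Matrix α β B) (C : Matrix β γ B) (x : γ → B) :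
    mmVec (mmMul A C) x = mmVec A (mmVec C x) := by
  funext i
  simp only [mmVec, mmMul, iSup_inf_eq, inf_iSup_eq, inf_assoc]
  exact iSup_comm

lemma exists_lt_le_card_eq {α : Type*} [Fintype α] (f : ℕ → α) :
    ∃ a b, a < b ∧ b ≤ Fintype.card α ∧ f a = f b := by
  obtain ⟨a, b, hne, heq⟩ :=
    Fintype.exists_ne_map_eq_of_card_lt (fun t : Fin (Fintype.card α + 1) => f t) (by simp)
  rcases hne.lt_or_gt with h | h
  · exact ⟨a, b, h, Nat.lt_succ_iff.1 b.isLt, heq⟩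
  · exact ⟨b, a, h, Nat.lt_succ_iff.1 a.isLt, heq.symm⟩

lemma exists_walk_of_mmVec_eq {α : Type*} [Finite α] {A : Matrix α α B} {x : α → B}
    (hx : mmVec A x = x) (k : α) :
    ∃ f : ℕ → α, f 0 = k ∧ ∀ t, x k ≤ A (f t) (f (t + 1)) ⊓ x (f (t + 1)) := by
  have : Nonempty α := ⟨k⟩
  have hstep : ∀ j, ∃ l, x j ≤ A j l ⊓ x l := fun j => by
    obtain ⟨l, hl⟩ := exists_eq_ciSup_of_finite (f := fun l => A j l ⊓ x l)
    exact ⟨l, (congrFun hx j).ge.trans hl.ge⟩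
  choose w hw using hstep
  have hmono : ∀ t, x k ≤ x (w^[t] k) := by
    intro t
    induction t with
    | zero => exact le_rfl
    | succ t ih =>
      rw [Function.iterate_succ_apply']
      exact ih.trans ((hw _).trans inf_le_right)
  refine ⟨fun t => w^[t] k, rfl, fun t => ?_⟩
  simp only [Function.iterate_succ_apply']
  exact (hmono t).trans (hw _)

section Walks

variable {α : Type*} [DecidableEq α] (A : Matrix α α B)

lemma le_mmPow_of_walk {c : B} {m : ℕ} {f : ℕ → α} (hf : ∀ t < m, c ≤ A (f t) (f (t + 1))) :
    c ≤ mmPow A m (f 0) (f m) := by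
  induction m generalizing f with
  | zero => simpa [mmPow, mmId] using unitInterval.le_one' (t := c)
  | succ m ih =>
    have htail : c ≤ mmPow A m (f 1) (f (m + 1)) :=
      ih (f := fun t => f (t + 1)) fun t ht => hf (t + 1) (by omega)
    exact le_iSup_of_le (f 1) (le_inf (hf 0 (by omega)) htail)

/-- Cutting out the closed subwalk between the times `a` and `b`. -/
lemma le_mmPow_of_walk_of_eq {c : B} {m a b : ℕ} {f : ℕ → α}
    (hf : ∀ t < m, c ≤ A (f t) (f (t + 1))) (hab : a < b) (hbm : b ≤ m) (hfab : f a = f b) :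
    c ≤ mmPow A (m - (b - a)) (f 0) (f m) := by
  set σ : ℕ → ℕ := fun t => if t < a then t else t + (b - a) with hσ
  have hσ0 : f (σ 0) = f 0 := by
    rcases Nat.eq_zero_or_pos a with rfl | ha
    · simp [hσ, hfab]
    · simp [hσ, ha]
  have hσm : σ (m - (b - a)) = m := by simp only [hσ]; split_ifs <;> omega
  have hσsucc : ∀ t, f (σ (t + 1)) = f (σ t + 1) := by
    intro t
    simp only [hσ]
    split_ifs with h1 h2 h2
    · rfl
    · omega
    · rw [show t + 1 = a by omega, Nat.add_sub_cancel' hab.le, hfab]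
    · rw [Nat.add_right_comm]
  have := le_mmPow_of_walk A (m := m - (b - a)) (f := f ∘ σ) fun t ht => by
    simp only [Function.comp_apply, hσsucc]
    exact hf _ (by simp only [hσ]; split_ifs <;> omega)
  simpa [hσ0, hσm] using this

lemma exists_walk_of_pos_mmPow [Finite α] {m : ℕ} {i j : α} (hpos : 0 < mmPow A m i j) :
    ∃ f : ℕ → α, f 0 = i ∧ f m = j ∧ ∀ t < m, mmPow A m i j ≤ A (f t) (f (t + 1)) := by
  induction m generalizing i with
  | zero =>
    have hij : i = j := by
      by_contra h
      simp [mmPow, mmId, h] at hpos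
    exact ⟨fun _ => i, rfl, hij, fun t ht => absurd ht (Nat.not_lt_zero t)⟩
  | succ m ih =>
    have : Nonempty α := ⟨i⟩
    obtain ⟨k, hk⟩ := exists_eq_ciSup_of_finite (f := fun k => A i k ⊓ mmPow A m k j)
    change A i k ⊓ mmPow A m k j = mmPow A (m + 1) i j at hk
    obtain ⟨g, hg0, hgm, hg⟩ := ih (hpos.trans_le (hk ▸ inf_le_right))
    refine ⟨fun t => if t = 0 then i else g (t - 1), rfl, by simp [hgm], ?_⟩
    rintro (_ | t) ht
    · simp only [Nat.add_one_ne_zero, if_false, zero_add, hg0, ← hk]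
      exact inf_le_left
    · simpa [← hk] using inf_le_right.trans (hg t (by omega))

variable {A} in
lemma mmPow_inf_le_of_mmVec_eq {x : α → B} (hx : mmVec A x = x) (m : ℕ) (k i : α) :
    mmPow A m k i ⊓ x i ≤ x k := by
  induction m generalizing k with
  | zero =>
    by_cases h : k = i
    · subst h
      exact inf_le_right
    · simp [mmPow, mmId, h]
  | succ m ih =>
    calc mmPow A (m + 1) k i ⊓ x i = ⨆ j, A k j ⊓ (mmPow A m j i ⊓ x i) := by
          simp only [mmPow, mmMul, iSup_inf_eq, inf_assoc]
      _ ≤ ⨆ j, A k j ⊓ x j := iSup_mono fun j => inf_le_inf_left _ (ih j)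
      _ = x k := congrFun hx k

end Walks

variable {α : Type*} [Fintype α] [DecidableEq α] (A : Matrix α α B)

lemma mmPow_le_mmStar (m : ℕ) (i j : α) : mmPow A m i j ≤ mmStar A i j := by
  induction m using Nat.strong_induction_on generalizing i j with
  | _ m ih =>
  rcases lt_or_ge m (Fintype.card α) with hm | hm
  · exact le_iSup₂_of_le m (mem_range.2 hm) le_rfl
  rcases (bot_le : ⊥ ≤ mmPow A m i j).eq_or_lt with h0 | hpos
  · exact h0 ▸ bot_le
  obtain ⟨f, rfl, rfl, hf⟩ := exists_walk_of_pos_mmPow A hpos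
  obtain ⟨a, b, hab, hb, hfab⟩ := exists_lt_le_card_eq f
  exact (le_mmPow_of_walk_of_eq A hf hab (hb.trans hm) hfab).trans (ih _ (by omega) _ _)

lemma mmPlus_le_mmStar (i j : α) : mmPlus A i j ≤ mmStar A i j :=
  iSup₂_le fun m _ => mmPow_le_mmStar A m i j

lemma mmMul_mmStar : mmMul A (mmStar A) = mmPlus A := by
  funext k i
  apply le_antisymm
  · simp only [mmMul, mmStar, inf_iSup_eq]
    refine iSup_le fun j => iSup₂_le fun m hm => ?_
    refine le_iSup₂_of_le (m + 1) ?_ (le_iSup_of_le j le_rfl)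
    simp only [mem_range, mem_Icc] at hm ⊢
    omega
  · refine iSup₂_le fun m hm => ?_
    simp only [mem_Icc] at hm
    obtain ⟨m, rfl⟩ : ∃ s, m = s + 1 := ⟨m - 1, by omega⟩
    refine iSup_le fun j => le_iSup_of_le j (inf_le_inf_left _ (le_iSup₂_of_le m ?_ le_rfl))
    simp only [mem_range]
    omega

lemma mmPlus_inf_mmStar (k i : α) :
    mmPlus A i i ⊓ mmStar A k i = mmPlus A i i ⊓ mmPlus A k i := by
  refine le_antisymm ?_ (inf_le_inf_left _ (mmPlus_le_mmStar A k i))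
  rw [mmStar, inf_iSup₂_eq]
  refine iSup₂_le fun m hm => ?_
  rcases m with _ | m
  · by_cases h : k = i
    · subst h
      exact le_inf inf_le_left inf_le_left
    · simp [mmPow, mmId, h]
  · refine inf_le_inf_left _ (le_iSup₂_of_le (m + 1) ?_ le_rfl)
    simp only [mem_range, mem_Icc] at hm ⊢
    omega

lemma mmMul_mmStarLam (lam : B) : mmMul A (mmStarLam A lam) = mmStarLam A lam := by
  funext k i
  calc (⨆ j, A k j ⊓ (lam ⊓ mmPlus A i i ⊓ mmStar A j i))
      = lam ⊓ (mmPlus A i i ⊓ mmMul A (mmStar A) k i) := by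
        simp only [mmMul, inf_iSup_eq]
        congr 1
        funext j
        ac_rfl
    _ = lam ⊓ mmPlus A i i ⊓ mmStar A k i := by
        rw [mmMul_mmStar, ← mmPlus_inf_mmStar, inf_assoc]

variable {A} in
lemma mmVec_mmStarLam_eq_of_mmVec_eq {lam : B} {x : α → B} (hx : mmVec A x = x)
    (hlam : ∀ i, x i ≤ lam) : mmVec (mmStarLam A lam) x = x := by
  funext k
  refine le_antisymm (iSup_le fun i => ?_) ?_
  · calc mmStarLam A lam k i ⊓ x i ≤ mmStar A k i ⊓ x i := inf_le_inf_right _ inf_le_right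
      _ ≤ x k := by
        rw [mmStar, iSup₂_inf_eq]
        exact iSup₂_le fun m _ => mmPow_inf_le_of_mmVec_eq hx m k i
  obtain ⟨f, rfl, hf⟩ := exists_walk_of_mmVec_eq hx k
  obtain ⟨a, b, hab, hb, hfab⟩ := exists_lt_le_card_eq f
  have hpath : x (f 0) ≤ mmStar A (f 0) (f a) :=
    (le_mmPow_of_walk A fun t _ => (hf t).trans inf_le_left).trans
      (le_iSup₂_of_le a (mem_range.2 (by omega)) le_rfl)
  have hcycle : x (f 0) ≤ mmPlus A (f a) (f a) := by
    have := le_mmPow_of_walk A (m := b - a) (f := fun t => f (a + t))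
      fun t _ => (hf (a + t)).trans inf_le_left
    simp only [add_zero, Nat.add_sub_cancel' hab.le, ← hfab] at this
    exact this.trans (le_iSup₂_of_le (b - a) (by simp only [mem_Icc]; omega) le_rfl)
  have hvertex : x (f 0) ≤ x (f a) := by
    rcases a with _ | a
    · exact le_rfl
    · exact (hf a).trans inf_le_right
  exact le_iSup_of_le (f a) (le_inf (le_inf (le_inf (hlam _) hcycle) hpath) hvertex)

end MaxMin

open MaxMin in
/-- The set of pure `λ`-eigenvectors of `A` (vectors `x` with `A ⊗ x = x`
and `x_i ≤ λ` for all `i`) is the max-min column space `{A*_λ ⊗ y : y ∈ Bⁿ}`; in particular,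
each column of `A*_λ` is a pure `λ`-eigenvector of `A`. -/
theorem stmt11 {n : ℕ} (A : Matrix (Fin n) (Fin n) B) (lam : B) :
    (∀ x : Fin n → B,
      (mmVec A x = x ∧ ∀ i, x i ≤ lam) ↔ ∃ y : Fin n → B, x = mmVec (mmStarLam A lam) y) ∧
    (∀ i : Fin n,
      (mmVec A (fun k => mmStarLam A lam k i) = fun k => mmStarLam A lam k i) ∧
      ∀ k, mmStarLam A lam k i ≤ lam) := by
  have hcol : ∀ i k, mmStarLam A lam k i ≤ lam := fun _ _ => inf_le_left.trans inf_le_left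
  refine ⟨fun x => ⟨fun ⟨hx, hlam⟩ => ⟨x, ?_⟩, ?_⟩, fun i => ⟨?_, hcol i⟩⟩
  · exact (mmVec_mmStarLam_eq_of_mmVec_eq hx hlam).symm
  · rintro ⟨y, rfl⟩
    refine ⟨by rw [← mmVec_mmMul, mmMul_mmStarLam], fun k => iSup_le fun j => ?_⟩
    exact inf_le_left.trans (hcol j k)
  · funext k
    exact congrFun (congrFun (mmMul_mmStarLam A lam) k) i
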